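/- The set { ∏_{k∈I} (p_k + 2)/(p_k + 1) : I a finite set of indices of odd primes } is dense in [1, ∞), where p_k denotes the k-th odd prime. -/

import Mathlib

open Filter Topology Set

/-- The `k`-th odd prime (0-indexed). -/
noncomputable def oddPrime (k : ℕ) : ℕ := Nat.nth (fun q => Nat.Prime q ∧ q ≠ 2) k

lemma oddPrime_infinite : {q : ℕ | Nat.Prime q ∧ q ≠ 2}.Infinite := by
  have h : {q : ℕ | Nat.Prime q ∧ q ≠ 2} = {q | Nat.Prime q} \ {2} := by
    ext q; simp [and_comm]
  rw [h]
  exact Set.Infinite.diff Nat.infinite_setOf_prime (Set.finite_singleton 2)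

lemma oddPrime_mem (k : ℕ) : Nat.Prime (oddPrime k) ∧ oddPrime k ≠ 2 :=
  Nat.nth_mem_of_infinite oddPrime_infinite k

lemma three_le_oddPrime (k : ℕ) : 3 ≤ oddPrime k := by
  obtain ⟨hp, hne⟩ := oddPrime_mem k
  have := hp.two_le
  omega

lemma oddPrime_tendsto : Tendsto (fun k => (oddPrime k : ℝ)) atTop atTop :=
  tendsto_natCast_atTop_atTop.comp
    (Nat.nth_strictMono oddPrime_infinite).tendsto_atTop

/-- The log of the k-th factor. -/
noncomputable def oa (k : ℕ) : ℝ :=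
  Real.log ((oddPrime k + 2 : ℝ) / (oddPrime k + 1))

lemma oddPrime_pos_real (k : ℕ) : (0:ℝ) < (oddPrime k : ℝ) + 1 := by positivity

lemma oa_pos (k : ℕ) : 0 < oa k := by
  apply Real.log_pos
  rw [lt_div_iff₀ (oddPrime_pos_real k)]
  linarith

lemma oa_tendsto_zero : Tendsto oa atTop (𝓝 0) := by
  have h1 : Tendsto (fun k => (oddPrime k : ℝ) + 1) atTop atTop :=
    tendsto_atTop_add_const_right _ 1 oddPrime_tendsto
  have h2 : Tendsto (fun k => ((oddPrime k + 2 : ℝ) / (oddPrime k + 1))) atTop (𝓝 1) := by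
    have h3 : Tendsto (fun k => 1 + ((oddPrime k : ℝ) + 1)⁻¹) atTop (𝓝 (1 + 0)) :=
      tendsto_const_nhds.add h1.inv_tendsto_atTop
    rw [add_zero] at h3
    refine h3.congr fun k => ?_
    field_simp
    ring
  have := (Real.continuousAt_log one_ne_zero).tendsto.comp h2
  rw [Real.log_one] at this
  exact this

lemma oa_lower (k : ℕ) : ((oddPrime k : ℝ) + 2)⁻¹ ≤ oa k := by
  have hp := oddPrime_pos_real k
  have h := Real.one_sub_inv_le_log_of_pos
    (x := ((oddPrime k + 2 : ℝ) / (oddPrime k + 1))) (by positivity)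
  calc ((oddPrime k : ℝ) + 2)⁻¹
      = 1 - (((oddPrime k : ℝ) + 2) / ((oddPrime k : ℝ) + 1))⁻¹ := by
        rw [inv_div]; field_simp; ring
    _ ≤ oa k := h

lemma oa_not_summable : ¬ Summable oa := by
  intro hs
  -- then 1/(p_k+2) is summable
  have h1 : Summable (fun k => ((oddPrime k : ℝ) + 2)⁻¹) :=
    hs.of_nonneg_of_le (fun k => by positivity) oa_lower
  -- transfer to indicator on ℕ
  set f : ℕ → ℝ := Set.indicator {q : ℕ | Nat.Prime q ∧ q ≠ 2} (fun q => ((q : ℝ) + 2)⁻¹)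
  have hrange : Set.range oddPrime = {q : ℕ | Nat.Prime q ∧ q ≠ 2} :=
    Nat.range_nth_of_infinite oddPrime_infinite
  have hinj : Function.Injective oddPrime := Nat.nth_injective oddPrime_infinite
  have hf : Summable f := by
    rw [← hinj.summable_iff (by
      intro x hx
      apply Set.indicator_of_notMem
      rwa [← hrange])]
    refine h1.congr fun k => ?_
    have hm : oddPrime k ∈ {q : ℕ | Nat.Prime q ∧ q ≠ 2} := oddPrime_mem k
    exact (Set.indicator_of_mem hm (fun q => ((q:ℝ)+2)⁻¹)).symm
  -- combine with singleton at 2 to dominate indicator of primes of 1/q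
  have h2 : Summable (fun q : ℕ => if q = 2 then (1/2 : ℝ) else 0) := by
    apply summable_of_ne_finset_zero (s := {2})
    intro b hb
    simp at hb
    simp [hb]
  have hdom : Summable (fun q => 3 * f q + (if q = 2 then (1/2 : ℝ) else 0)) :=
    (hf.mul_left 3).add h2
  have : Summable (Set.indicator {p : ℕ | p.Prime} (fun n : ℕ => (1 : ℝ) / n)) := by
    apply hdom.of_nonneg_of_le
    · intro q
      apply Set.indicator_nonneg
      intro q _; positivity
    · intro q
      by_cases hq : q.Prime
      · by_cases h2q : q = 2
        · subst h2q
          rw [Set.indicator_of_mem (by simpa using hq)]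
          have : f 2 = 0 := Set.indicator_of_notMem (by simp) _
          simp [this]
        · rw [Set.indicator_of_mem (by simpa using hq)]
          have hmem : q ∈ {q : ℕ | Nat.Prime q ∧ q ≠ 2} := ⟨hq, h2q⟩
          have : f q = ((q : ℝ) + 2)⁻¹ := Set.indicator_of_mem hmem _
          rw [this]
          have hq1 : (1:ℝ) ≤ (q:ℝ) := by exact_mod_cast hq.one_lt.le
          have hqpos : (0:ℝ) < q := by linarith
          have h3 : (1:ℝ)/q ≤ 3 * ((q : ℝ) + 2)⁻¹ := by
            calc (1:ℝ)/q ≤ 3/((q:ℝ)+2) := by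
                  rw [div_le_div_iff₀ hqpos (by linarith)]; linarith
              _ = 3 * ((q : ℝ) + 2)⁻¹ := by rw [div_eq_mul_inv]
          simp only [h2q, if_false, add_zero]
          exact h3
      · rw [Set.indicator_of_notMem (by simpa using hq)]
        have hfq : 0 ≤ f q := Set.indicator_nonneg (fun q _ => by positivity) _
        split_ifs <;> linarith
  exact not_summable_one_div_on_primes this

lemma oa_sums_tendsto :
    Tendsto (fun n => ∑ i ∈ Finset.range n, oa i) atTop atTop :=
  (not_summable_iff_tendsto_nat_atTop_of_nonneg (fun n => (oa_pos n).le)).mp oa_not_summable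

/-- Greedy lemma: finite subset sums are dense-ish. -/
lemma exists_finset_sum_mem (c ε : ℝ) (hc : 0 ≤ c) (hε : 0 < ε) :
    ∃ I : Finset ℕ, (∑ k ∈ I, oa k) ∈ Set.Ico c (c + ε) := by
  obtain ⟨N, hN⟩ := (oa_tendsto_zero.eventually (eventually_lt_nhds hε : ∀ᶠ x in 𝓝 0, x < ε)).exists_forall_of_atTop
  -- tail sums diverge
  have htail : Tendsto (fun j => ∑ i ∈ Finset.Ico N (N + j), oa i) atTop atTop := by
    have h1 : Tendsto (fun j => (∑ i ∈ Finset.range (N + j), oa i)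
        + -(∑ i ∈ Finset.range N, oa i)) atTop atTop :=
      tendsto_atTop_add_const_right _ _
        (oa_sums_tendsto.comp (tendsto_atTop_mono (fun j => Nat.le_add_left j N) tendsto_id))
    refine h1.congr fun j => ?_
    rw [Finset.sum_Ico_eq_sub _ (by omega), sub_eq_add_neg]
  have hex : ∃ j, c ≤ ∑ i ∈ Finset.Ico N (N + j), oa i :=
    (htail.eventually_ge_atTop c).exists
  classical
  obtain ⟨j, hjspec, hminall⟩ : ∃ j, (c ≤ ∑ i ∈ Finset.Ico N (N + j), oa i) ∧
      ∀ j' < j, ¬ c ≤ ∑ i ∈ Finset.Ico N (N + j'), oa i :=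
    ⟨Nat.find hex, Nat.find_spec hex, fun _ h => Nat.find_min hex h⟩
  refine ⟨Finset.Ico N (N + j), hjspec, ?_⟩
  rcases Nat.eq_zero_or_pos j with h0 | hpos
  · subst h0
    simp only [add_zero, Finset.Ico_self, Finset.sum_empty] at hjspec ⊢
    linarith
  · obtain ⟨j', rfl⟩ : ∃ j', j = j' + 1 := ⟨j - 1, by omega⟩
    have hmin : ¬ c ≤ ∑ i ∈ Finset.Ico N (N + j'), oa i := hminall j' (by omega)
    push_neg at hmin
    rw [show N + (j' + 1) = (N + j') + 1 by ring,
      Finset.sum_Ico_succ_top (by omega)]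
    have := hN (N + j') (by omega)
    linarith

/-- The set of finite products `∏_{k ∈ I} (p_k + 2)/(p_k + 1)` over finite sets
of indices of odd primes is dense in `[1, ∞)`. -/
theorem closure_finite_products_eq_Ici :
    closure {s : ℝ | ∃ I : Finset ℕ,
      s = ∏ k ∈ I, ((oddPrime k + 2 : ℝ) / (oddPrime k + 1))} = Set.Ici 1 := by
  apply subset_antisymm
  · apply closure_minimal _ isClosed_Ici
    rintro s ⟨I, rfl⟩
    rw [Set.mem_Ici]
    calc (1:ℝ) = ∏ _k ∈ I, 1 := by simp
      _ ≤ _ := Finset.prod_le_prod (fun i _ => zero_le_one) (fun k _ => by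
          rw [le_div_iff₀ (oddPrime_pos_real k)]; linarith)
  · intro x hx
    have hx1 : (1:ℝ) ≤ x := hx
    have hxpos : (0:ℝ) < x := by linarith
    rw [Metric.mem_closure_iff]
    intro ε hε
    have hδ : 0 < Real.log (1 + ε / x) := Real.log_pos (by
      have : 0 < ε / x := div_pos hε hxpos
      linarith)
    obtain ⟨I, hI1, hI2⟩ := exists_finset_sum_mem (Real.log x) (Real.log (1 + ε / x))
      (Real.log_nonneg hx1) hδ
    refine ⟨∏ k ∈ I, ((oddPrime k + 2 : ℝ) / (oddPrime k + 1)), ⟨I, rfl⟩, ?_⟩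
    have hprod : ∏ k ∈ I, ((oddPrime k + 2 : ℝ) / (oddPrime k + 1))
        = Real.exp (∑ k ∈ I, oa k) := by
      rw [Real.exp_sum]
      refine Finset.prod_congr rfl fun k _ => ?_
      rw [oa, Real.exp_log (by positivity)]
    rw [hprod, Real.dist_eq]
    have hge : x ≤ Real.exp (∑ k ∈ I, oa k) := by
      calc x = Real.exp (Real.log x) := (Real.exp_log hxpos).symm
        _ ≤ _ := Real.exp_le_exp.mpr hI1
    have hlt : Real.exp (∑ k ∈ I, oa k) < x + ε := by
      calc Real.exp (∑ k ∈ I, oa k)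
          < Real.exp (Real.log x + Real.log (1 + ε / x)) := Real.exp_lt_exp.mpr hI2
        _ = x * (1 + ε / x) := by
            rw [Real.exp_add, Real.exp_log hxpos, Real.exp_log (by positivity)]
        _ = x + ε := by field_simp
    rw [abs_sub_lt_iff]
    constructor <;> linarith
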